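/- Define the five pairs of vectors in ℝ³: (η₁¹, η₂¹) = ((1,0,0), (0,1,0)); (η₁², η₂²) = ((1,0,0), (0,0,1)); (η₁³, η₂³) = ((−4/5, 3/5, 0), (0,0,1)); (η₁⁴, η₂⁴) = ((−4/5, 0, 3/5), (0,1,0)); (η₁⁵, η₂⁵) = ((0, −4/5, 3/5), (1,0,0)). Then the five matrices Tᵢ = η₁ⁱ ⊗ η₁ⁱ − η₂ⁱ ⊗ η₂ⁱ (i = 1, …, 5) are linearly independent over ℝ and form a basis of the real vector space of symmetric traceless 3×3 real matrices. -/

import Mathlib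

open scoped BigOperators

/-!
Only `T5 2`, `T5 3`, `T5 4` have off-diagonal entries, at the positions `(0,1)`, `(0,2)`,
`(1,2)` respectively, each equal to `-12/25`. So for symmetric `M` the off-diagonal entries
determine the coefficients of these three; then `M 0 0` and `M 1 1` determine those of
`T5 0 = diag(1,-1,0)` and `T5 1 = diag(1,0,-1)`, and the trace fixes `M 2 2`. The resulting
linear coordinate map `T5Coord` sends `T5` to the standard basis, giving independence, and
reconstructs every symmetric traceless matrix from its coordinates, giving spanning.
-/

/-- The five matrices `Tᵢ = η₁ⁱ ⊗ η₁ⁱ − η₂ⁱ ⊗ η₂ⁱ` built from the explicit pairs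
`(η₁ⁱ, η₂ⁱ)` in the proof of the symmetric geometric lemma for traceless tensors. -/
noncomputable def T5 : Fin 5 → Matrix (Fin 3) (Fin 3) ℝ :=
  ![Matrix.vecMulVec ![1, 0, 0] ![1, 0, 0] - Matrix.vecMulVec ![0, 1, 0] ![0, 1, 0],
    Matrix.vecMulVec ![1, 0, 0] ![1, 0, 0] - Matrix.vecMulVec ![0, 0, 1] ![0, 0, 1],
    Matrix.vecMulVec ![-4/5, 3/5, 0] ![-4/5, 3/5, 0] - Matrix.vecMulVec ![0, 0, 1] ![0, 0, 1],
    Matrix.vecMulVec ![-4/5, 0, 3/5] ![-4/5, 0, 3/5] - Matrix.vecMulVec ![0, 1, 0] ![0, 1, 0],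
    Matrix.vecMulVec ![0, -4/5, 3/5] ![0, -4/5, 3/5] - Matrix.vecMulVec ![1, 0, 0] ![1, 0, 0]]

open Matrix

lemma Matrix.isSymm_vecMulVec_self {n α : Type*} [CommMagma α] (v : n → α) :
    (vecMulVec v v).IsSymm :=
  transpose_vecMulVec v v

noncomputable def T5Coord : Matrix (Fin 3) (Fin 3) ℝ →ₗ[ℝ] Fin 5 → ℝ where
  toFun M := ![-M 1 1 - 3/4 * M 0 1 + 25/12 * M 0 2 - 4/3 * M 1 2,
    M 0 0 + M 1 1 + 25/12 * M 0 1 - 3/4 * M 0 2 - 3/4 * M 1 2,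
    -25/12 * M 0 1, -25/12 * M 0 2, -25/12 * M 1 2]
  map_add' M N := by
    ext i
    fin_cases i <;> simp only [Matrix.add_apply, Pi.add_apply, Fin.reduceFinMk, cons_val] <;> ring
  map_smul' c M := by
    ext i
    fin_cases i <;>
      simp only [Matrix.smul_apply, smul_eq_mul, Pi.smul_apply, RingHom.id_apply,
        Fin.reduceFinMk, cons_val] <;>
      ring

lemma T5Coord_comp_T5 : T5Coord ∘ T5 = Pi.basisFun ℝ (Fin 5) := by
  ext j i
  fin_cases j <;> fin_cases i <;>
    norm_num [T5Coord, T5, vecMulVec_apply, cons_val_two, cons_val_three, cons_val_four]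

lemma linearIndependent_T5 : LinearIndependent ℝ T5 :=
  .of_comp T5Coord (T5Coord_comp_T5 ▸ (Pi.basisFun ℝ (Fin 5)).linearIndependent)

lemma isSymm_T5 (i : Fin 5) : (T5 i).IsSymm := by
  fin_cases i <;> exact (isSymm_vecMulVec_self _).sub (isSymm_vecMulVec_self _)

lemma trace_T5 (i : Fin 5) : (T5 i).trace = 0 := by
  fin_cases i <;> simp only [T5, Fin.reduceFinMk, cons_val, trace_sub, trace_vecMulVec] <;>
    norm_num [dotProduct, Fin.sum_univ_succ]

lemma sum_T5Coord_smul_T5 {M : Matrix (Fin 3) (Fin 3) ℝ} (hM : M.IsSymm) (htr : M.trace = 0) :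
    ∑ i, T5Coord M i • T5 i = M := by
  have h₁₀ : M 1 0 = M 0 1 := hM.apply 0 1
  have h₂₀ : M 2 0 = M 0 2 := hM.apply 0 2
  have h₂₁ : M 2 1 = M 1 2 := hM.apply 1 2
  have h₂₂ : M 2 2 = -M 0 0 - M 1 1 := by
    rw [trace, Fin.sum_univ_three] at htr
    simp only [diag_apply] at htr
    linarith
  ext k l
  fin_cases k <;> fin_cases l <;> simp only [Fin.reduceFinMk] <;>
    norm_num [T5Coord, T5, Fin.sum_univ_five, vecMulVec_apply, cons_val_two, cons_val_three,
      cons_val_four, h₁₀, h₂₀, h₂₁, h₂₂] <;> ring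

theorem T5_basis_of_sym_traceless :
    LinearIndependent ℝ T5 ∧
    (∀ i, (T5 i).IsSymm ∧ (T5 i).trace = 0) ∧
    (∀ M : Matrix (Fin 3) (Fin 3) ℝ, M.IsSymm → M.trace = 0 →
      M ∈ Submodule.span ℝ (Set.range T5)) :=
  ⟨linearIndependent_T5, fun i => ⟨isSymm_T5 i, trace_T5 i⟩, fun _ hM htr =>
    (Submodule.mem_span_range_iff_exists_fun ℝ).2 ⟨_, sum_T5Coord_smul_T5 hM htr⟩⟩
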